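/- For any real x > 0 and any s ∈ (0,1), it holds that x^{1-s} < Γ(x+1)/Γ(x+s) < (x+1)^{1-s}, where Γ is the Gamma function. -/
import Mathlib


open Real

/-- Gautschi's inequality: for `x > 0` and `s ∈ (0,1)`,
`x^(1-s) < Γ(x+1)/Γ(x+s) < (x+1)^(1-s)`. -/
theorem gautschi_inequality (x s : ℝ) (hx : 0 < x) (hs : s ∈ Set.Ioo (0 : ℝ) 1) :
    x ^ (1 - s) < Real.Gamma (x + 1) / Real.Gamma (x + s) ∧
    Real.Gamma (x + 1) / Real.Gamma (x + s) < (x + 1) ^ (1 - s) := by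
  obtain ⟨hs0, hs1⟩ := hs
  have hxs : (0:ℝ) < x + s := by linarith
  have hx1 : (0:ℝ) < x + 1 := by linarith
  have hG : 0 < Real.Gamma (x + s) := Real.Gamma_pos_of_pos hxs
  have hG1 : 0 < Real.Gamma (x + 1) := Real.Gamma_pos_of_pos hx1
  have h1s : (0:ℝ) < 1 - s := by linarith
  -- functional equations
  have hfe1 : Real.Gamma (x + 1 + s) = (x + s) * Real.Gamma (x + s) := by
    have := Real.Gamma_add_one hxs.ne'
    rw [show x + 1 + s = x + s + 1 by ring, this]
  have hfe2 : Real.Gamma (x + 2) = (x + 1) * Real.Gamma (x + 1) := by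
    have := Real.Gamma_add_one hx1.ne'
    rw [show x + 2 = x + 1 + 1 by ring, this]
  -- combining rpow's of Gamma
  have hcomb : ∀ y c : ℝ, 0 < y →
      Real.Gamma y ^ (1 - s) * ((y) * Real.Gamma y) ^ s = Real.Gamma y * y ^ s := by
    intro y c hy
    have hGy : 0 < Real.Gamma y := Real.Gamma_pos_of_pos hy
    rw [Real.mul_rpow hy.le hGy.le, show Real.Gamma y ^ (1-s) * (y ^ s * Real.Gamma y ^ s)
        = (Real.Gamma y ^ (1-s) * Real.Gamma y ^ s) * y ^ s by ring,
      ← Real.rpow_add hGy]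
    norm_num
  constructor
  · -- lower bound
    have h2 : Real.Gamma ((1-s) * (x+1) + s * (x+2)) ≤
        Real.Gamma (x+1) ^ (1-s) * Real.Gamma (x+2) ^ s :=
      Real.Gamma_mul_add_mul_le_rpow_Gamma_mul_rpow_Gamma hx1 (by linarith) h1s hs0 (by ring)
    rw [show (1-s) * (x+1) + s * (x+2) = x + 1 + s by ring, hfe1, hfe2, hcomb _ 0 hx1] at h2
    -- h2 : (x+s) * Γ(x+s) ≤ Γ(x+1) * (x+1)^s
    -- Bernoulli: x^(1-s) * (x+1)^s < x + s
    have hbern : x ^ (1 - s) * (x + 1) ^ s < x + s := by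
      have hb := rpow_one_add_lt_one_add_mul_self (s := 1/x)
        (by linarith [one_div_pos.mpr hx]) (one_div_pos.mpr hx).ne' hs0 hs1
      have hx1eq : x + 1 = x * (1 + 1/x) := by field_simp
      have h11 : (0:ℝ) < 1 + 1/x := by positivity
      calc x ^ (1-s) * (x+1) ^ s = x ^ (1-s) * (x ^ s * (1 + 1/x) ^ s) := by
            rw [hx1eq, Real.mul_rpow hx.le h11.le]
        _ = x * (1 + 1/x) ^ s := by
            rw [show x ^ (1-s) * (x ^ s * (1+1/x)^s) = (x ^ (1-s) * x ^ s) * (1+1/x)^s by ring,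
              ← Real.rpow_add hx]; norm_num
        _ < x * (1 + s * (1/x)) := by
            exact mul_lt_mul_of_pos_left hb hx
        _ = x + s := by field_simp
    rw [lt_div_iff₀ hG]
    have hpow : (0:ℝ) < (x+1) ^ s := rpow_pos_of_pos hx1 s
    -- x^(1-s) * Γ(x+s) < Γ(x+1)
    -- from h2: Γ(x+1) ≥ (x+s)*Γ(x+s)/(x+1)^s > x^(1-s)*Γ(x+s)
    have : x ^ (1-s) * (x+1) ^ s * Real.Gamma (x+s) < (x+s) * Real.Gamma (x+s) :=
      mul_lt_mul_of_pos_right hbern hG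
    nlinarith [mul_pos hpow hG]
  · -- upper bound
    have h1 : Real.Gamma (s * (x+s) + (1-s) * (x+1+s)) ≤
        Real.Gamma (x+s) ^ s * Real.Gamma (x+1+s) ^ (1-s) :=
      Real.Gamma_mul_add_mul_le_rpow_Gamma_mul_rpow_Gamma hxs (by linarith) hs0 h1s (by ring)
    rw [show s * (x+s) + (1-s) * (x+1+s) = x + 1 by ring, hfe1] at h1
    have hrw : Real.Gamma (x+s) ^ s * ((x+s) * Real.Gamma (x+s)) ^ (1-s)
        = Real.Gamma (x+s) * (x+s) ^ (1-s) := by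
      rw [Real.mul_rpow hxs.le hG.le, show Real.Gamma (x+s) ^ s * ((x+s)^(1-s) * Real.Gamma (x+s) ^ (1-s))
          = (Real.Gamma (x+s) ^ s * Real.Gamma (x+s) ^ (1-s)) * (x+s)^(1-s) by ring,
        ← Real.rpow_add hG]
      norm_num
    rw [hrw] at h1
    rw [div_lt_iff₀ hG]
    calc Real.Gamma (x+1) ≤ Real.Gamma (x+s) * (x+s) ^ (1-s) := h1
      _ < Real.Gamma (x+s) * (x+1) ^ (1-s) := by
          exact mul_lt_mul_of_pos_left (Real.rpow_lt_rpow hxs.le (by linarith) h1s) hG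
      _ = (x+1) ^ (1-s) * Real.Gamma (x+s) := by ring
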